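/- Let d ≥ 2 and let a = (a_1, …, a_d) be a probability vector with a_1 ≥ a_2 ≥ … ≥ a_d > 0. For every real R with 0 ≤ R < log d, the minimum of the relative entropy D(b‖a) over all probability vectors b on {1, …, d} satisfying H(b) ≥ R equals max_{0 < s ≤ 1} ((1 − s)·R − ψ(s))/s, where ψ(s) = log(∑_{i=1}^d a_i^s). -/

import Mathlib

open Finset

/-- Shannon entropy of a vector on `Fin d` (natural logarithm, `0 * log 0 = 0`). -/
noncomputable def shannonEntropy {d : ℕ} (b : Fin d → ℝ) : ℝ :=
  -∑ i, b i * Real.log (b i)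

/-- Relative entropy `D(b‖a)` (natural logarithm). -/
noncomputable def relativeEntropy {d : ℕ} (b a : Fin d → ℝ) : ℝ :=
  ∑ i, b i * (Real.log (b i) - Real.log (a i))

/-- `ψ(s) = log (∑ i, a i ^ s)` (real powers, natural logarithm). -/
noncomputable def psiFn {d : ℕ} (a : Fin d → ℝ) (s : ℝ) : ℝ :=
  Real.log (∑ i, a i ^ s)

/-- Gibbs' inequality. -/
lemma gibbs_aux {d : ℕ} (b q : Fin d → ℝ) (hb : ∀ i, 0 ≤ b i) (hb1 : ∑ i, b i = 1)
    (hq : ∀ i, 0 < q i) (hq1 : ∑ i, q i = 1) :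
    ∑ i, b i * Real.log (q i) ≤ ∑ i, b i * Real.log (b i) := by
  have key : ∀ i : Fin d, b i * Real.log (q i) - b i * Real.log (b i) ≤ q i - b i := by
    intro i
    rcases eq_or_lt_of_le (hb i) with h | h
    · simp [← h]
      exact (hq i).le
    · have hlog : Real.log (q i) - Real.log (b i) = Real.log (q i / b i) :=
        (Real.log_div (hq i).ne' h.ne').symm
      calc b i * Real.log (q i) - b i * Real.log (b i)
          = b i * Real.log (q i / b i) := by rw [← hlog]; ring
        _ ≤ b i * (q i / b i - 1) :=
            mul_le_mul_of_nonneg_left (Real.log_le_sub_one_of_pos (div_pos (hq i) h)) h.le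
        _ = q i - b i := by field_simp
  have hsum := Finset.sum_le_sum (fun i (_ : i ∈ univ) => key i)
  rw [Finset.sum_sub_distrib] at hsum
  have h2 : ∑ i, (q i - b i) = 0 := by rw [Finset.sum_sub_distrib, hb1, hq1]; ring
  linarith

/-- Supporting line of ψ at t. -/
lemma support_line {d : ℕ} (hd : 0 < d) (a : Fin d → ℝ) (ha_pos : ∀ i, 0 < a i) (t s : ℝ) :
    psiFn a t + ((∑ i, a i ^ t * Real.log (a i)) / (∑ i, a i ^ t)) * (s - t) ≤ psiFn a s := by
  have hne : (univ : Finset (Fin d)).Nonempty := univ_nonempty_iff.mpr ⟨⟨0, hd⟩⟩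
  set Zt : ℝ := ∑ i, a i ^ t with hZt
  set Zs : ℝ := ∑ i, a i ^ s with hZs
  have hZtpos : 0 < Zt := Finset.sum_pos (fun i _ => Real.rpow_pos_of_pos (ha_pos i) t) hne
  have hZspos : 0 < Zs := Finset.sum_pos (fun i _ => Real.rpow_pos_of_pos (ha_pos i) s) hne
  set w : Fin d → ℝ := fun i => a i ^ t / Zt with hw
  set z : Fin d → ℝ := fun i => a i ^ (s - t) with hz
  have hw1 : ∑ i, w i = 1 := by
    rw [hw]; rw [← Finset.sum_div]; exact div_self hZtpos.ne'
  have hzpos : ∀ i, 0 < z i := fun i => Real.rpow_pos_of_pos (ha_pos i) _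
  have hwpos : ∀ i, 0 < w i := fun i => div_pos (Real.rpow_pos_of_pos (ha_pos i) t) hZtpos
  have amgm := Real.geom_mean_le_arith_mean_weighted univ w z
    (fun i _ => (hwpos i).le) hw1 (fun i _ => (hzpos i).le)
  have hsum : ∑ i, w i * z i = Zs / Zt := by
    rw [Finset.sum_div]
    apply Finset.sum_congr rfl
    intro i _
    show a i ^ t / Zt * a i ^ (s - t) = a i ^ s / Zt
    rw [div_mul_eq_mul_div, ← Real.rpow_add (ha_pos i)]
    norm_num
  have hprodpos : 0 < ∏ i, z i ^ w i :=
    Finset.prod_pos (fun i _ => Real.rpow_pos_of_pos (hzpos i) _)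
  have hlog := Real.log_le_log hprodpos (hsum ▸ amgm)
  have hlogprod : Real.log (∏ i, z i ^ w i) = ∑ i, w i * ((s - t) * Real.log (a i)) := by
    rw [Real.log_prod (fun i _ => (Real.rpow_pos_of_pos (hzpos i) _).ne')]
    apply Finset.sum_congr rfl
    intro i _
    rw [Real.log_rpow (hzpos i), hz, Real.log_rpow (ha_pos i)]
  have hlhs : ∑ i, w i * ((s - t) * Real.log (a i))
      = ((∑ i, a i ^ t * Real.log (a i)) / Zt) * (s - t) := by
    rw [Finset.sum_div, Finset.sum_mul]
    apply Finset.sum_congr rfl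
    intro i _
    rw [hw]
    ring
  have hdiv : Real.log (Zs / Zt) = psiFn a s - psiFn a t := by
    rw [Real.log_div hZspos.ne' hZtpos.ne']; rfl
  rw [hlogprod, hlhs, hdiv] at hlog
  linarith

theorem stmt_0 {d : ℕ} (hd : 2 ≤ d) (a : Fin d → ℝ)
    (ha_pos : ∀ i, 0 < a i)
    (ha_anti : ∀ i j : Fin d, i ≤ j → a j ≤ a i)
    (ha_sum : ∑ i, a i = 1)
    (R : ℝ) (hR0 : 0 ≤ R) (hR1 : R < Real.log d) :
    ∃ m : ℝ,
      IsLeast {x : ℝ | ∃ b : Fin d → ℝ, (∀ i, 0 ≤ b i) ∧ (∑ i, b i = 1) ∧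
        R ≤ shannonEntropy b ∧ x = relativeEntropy b a} m ∧
      IsGreatest {y : ℝ | ∃ s : ℝ, 0 < s ∧ s ≤ 1 ∧
        y = ((1 - s) * R - psiFn a s) / s} m := by
  have hd0 : 0 < d := by omega
  have hne : (univ : Finset (Fin d)).Nonempty := univ_nonempty_iff.mpr ⟨⟨0, hd0⟩⟩
  set Z : ℝ → ℝ := fun s => ∑ i, a i ^ s with hZdef
  set N : ℝ → ℝ := fun s => ∑ i, a i ^ s * Real.log (a i) with hNdef
  set φ : ℝ → ℝ := fun s => N s / Z s with hφdef
  have hZpos : ∀ s, 0 < Z s := fun s =>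
    Finset.sum_pos (fun i _ => Real.rpow_pos_of_pos (ha_pos i) s) hne
  have hpsiZ : ∀ s, psiFn a s = Real.log (Z s) := fun s => rfl
  have hsupp : ∀ t s : ℝ, psiFn a t + φ t * (s - t) ≤ psiFn a s := fun t s =>
    support_line hd0 a ha_pos t s
  have hpsi1 : psiFn a 1 = 0 := by
    simp [psiFn, Real.rpow_one, ha_sum]
  have hphi1 : φ 1 = ∑ i, a i * Real.log (a i) := by
    simp [hφdef, hNdef, hZdef, Real.rpow_one, ha_sum]
  have hHa : shannonEntropy a = -φ 1 := by rw [hphi1, shannonEntropy]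
  -- the uniform lower bound
  have lower : ∀ s : ℝ, 0 < s → s ≤ 1 → ∀ b : Fin d → ℝ, (∀ i, 0 ≤ b i) → (∑ i, b i = 1) →
      R ≤ shannonEntropy b → ((1 - s) * R - psiFn a s) / s ≤ relativeEntropy b a := by
    intro s hs hs1 b hb hb1 hbR
    set q : Fin d → ℝ := fun i => a i ^ s / Z s with hqdef
    have hqpos : ∀ i, 0 < q i := fun i => div_pos (Real.rpow_pos_of_pos (ha_pos i) s) (hZpos s)
    have hq1 : ∑ i, q i = 1 := by
      rw [hqdef]; rw [← Finset.sum_div]; exact div_self (hZpos s).ne'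
    have hgibbs := gibbs_aux b q hb hb1 hqpos hq1
    have hlogq : ∀ i, Real.log (q i) = s * Real.log (a i) - psiFn a s := by
      intro i
      show Real.log (a i ^ s / Z s) = _
      rw [Real.log_div (Real.rpow_pos_of_pos (ha_pos i) s).ne' (hZpos s).ne',
        Real.log_rpow (ha_pos i), hpsiZ]
    have hsum : ∑ i, b i * Real.log (q i) = s * (∑ i, b i * Real.log (a i)) - psiFn a s := by
      have he : ∀ i ∈ univ, b i * Real.log (q i)
          = s * (b i * Real.log (a i)) - psiFn a s * b i := by
        intro i _; rw [hlogq i]; ring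
      rw [Finset.sum_congr rfl he, Finset.sum_sub_distrib, ← Finset.mul_sum, ← Finset.mul_sum,
        hb1, mul_one]
    set L : ℝ := ∑ i, b i * Real.log (b i) with hLdef
    have hL : L ≤ -R := by
      have : shannonEntropy b = -L := rfl
      linarith [hbR, this ▸ hbR]
    have key : s * (∑ i, b i * Real.log (a i)) ≤ L + psiFn a s := by
      linarith [hgibbs, hsum]
    have hD : relativeEntropy b a = L - ∑ i, b i * Real.log (a i) := by
      rw [relativeEntropy, hLdef, ← Finset.sum_sub_distrib]
      exact Finset.sum_congr rfl (fun i _ => by ring)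
    rw [div_le_iff₀ hs, hD]
    nlinarith [key, mul_nonneg (by linarith : (0:ℝ) ≤ 1 - s) (by linarith : (0:ℝ) ≤ -R - L)]
  by_cases hc : R ≤ shannonEntropy a
  · -- m = 0
    refine ⟨0, ⟨⟨a, fun i => (ha_pos i).le, ha_sum, hc, ?_⟩, ?_⟩,
      ⟨1, one_pos, le_refl 1, by simp [hpsi1]⟩, ?_⟩
    · simp [relativeEntropy]
    · rintro x ⟨b, hb, hb1, hbR, rfl⟩
      have := lower 1 one_pos le_rfl b hb hb1 hbR
      simpa [hpsi1] using this
    · rintro y ⟨s, hs, hs1, rfl⟩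
      have h1 := hsupp 1 s
      rw [hpsi1] at h1
      have hHaR : R ≤ -φ 1 := by rw [← hHa]; exact hc
      have hnum : (1 - s) * R - psiFn a s ≤ 0 := by
        nlinarith [mul_nonneg (by linarith : (0:ℝ) ≤ 1 - s) (by linarith : (0:ℝ) ≤ -φ 1 - R)]
      exact div_nonpos_of_nonpos_of_nonneg hnum hs.le
  · push_neg at hc
    -- continuity and IVT
    have hZcont : Continuous Z := by
      rw [hZdef]
      apply continuous_finset_sum
      intro i _
      exact (Real.continuous_exp.comp (continuous_const.mul continuous_id)).congr
        (fun s => (Real.rpow_def_of_pos (ha_pos i) s).symm)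
    have hNcont : Continuous N := by
      rw [hNdef]
      apply continuous_finset_sum
      intro i _
      have hc1 : Continuous (fun s : ℝ => Real.exp (Real.log (a i) * s) * Real.log (a i)) :=
        (Real.continuous_exp.comp (continuous_const.mul continuous_id)).mul continuous_const
      exact hc1.congr (fun s => by rw [Real.rpow_def_of_pos (ha_pos i) s])
    have hcont : Continuous (fun s => psiFn a s - s * φ s) := by
      have hψ : Continuous (fun s => psiFn a s) := by
        simp only [hpsiZ]
        exact hZcont.log (fun s => (hZpos s).ne')
      exact hψ.sub (continuous_id.mul (hNcont.div hZcont (fun s => (hZpos s).ne')))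
    have h0v : psiFn a (0:ℝ) - (0:ℝ) * φ 0 = Real.log d := by
      simp [psiFn, Real.rpow_zero]
    have h1v : psiFn a (1:ℝ) - (1:ℝ) * φ 1 = shannonEntropy a := by
      rw [hpsi1, hHa]; ring
    have hmem : R ∈ Set.Icc (psiFn a (1:ℝ) - (1:ℝ) * φ 1) (psiFn a (0:ℝ) - (0:ℝ) * φ 0) := by
      constructor
      · rw [h1v]; exact hc.le
      · rw [h0v]; exact hR1.le
    obtain ⟨σ, hσmem, hσeq⟩ := intermediate_value_Icc' (by norm_num : (0:ℝ) ≤ 1)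
      hcont.continuousOn hmem
    simp only at hσeq
    -- hσeq : psiFn a σ - σ * φ σ = R
    have hσ1 : σ ≤ 1 := hσmem.2
    have hσpos : 0 < σ := by
      rcases lt_or_eq_of_le hσmem.1 with h | h
      · exact h
      · exfalso; rw [← h] at hσeq; rw [h0v] at hσeq; linarith
    set m : ℝ := ((1 - σ) * R - psiFn a σ) / σ with hmdef
    set b : Fin d → ℝ := fun i => a i ^ σ / Z σ with hbdef
    have hbpos : ∀ i, 0 < b i := fun i => div_pos (Real.rpow_pos_of_pos (ha_pos i) σ) (hZpos σ)
    have hb1 : ∑ i, b i = 1 := by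
      rw [hbdef]; rw [← Finset.sum_div]; exact div_self (hZpos σ).ne'
    have hlogb : ∀ i, Real.log (b i) = σ * Real.log (a i) - psiFn a σ := by
      intro i
      show Real.log (a i ^ σ / Z σ) = _
      rw [Real.log_div (Real.rpow_pos_of_pos (ha_pos i) σ).ne' (hZpos σ).ne',
        Real.log_rpow (ha_pos i), hpsiZ]
    have hSb : ∑ i, b i * Real.log (b i) = (σ * N σ - psiFn a σ * Z σ) / Z σ := by
      rw [hNdef, hZdef, Finset.mul_sum, Finset.mul_sum, ← Finset.sum_sub_distrib,
        Finset.sum_div]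
      apply Finset.sum_congr rfl
      intro i _
      rw [hlogb i]
      show a i ^ σ / Z σ * (σ * Real.log (a i) - psiFn a σ) = _
      field_simp
      ring
    have hzz : Z σ ≠ 0 := (hZpos σ).ne'
    have hσeq' : psiFn a σ * Z σ - σ * N σ = R * Z σ := by
      rw [hφdef] at hσeq
      field_simp at hσeq
      linarith [hσeq]
    have hHb : shannonEntropy b = R := by
      rw [shannonEntropy, hSb, ← neg_div, neg_sub, hσeq', mul_div_assoc,
        div_self hzz, mul_one]
    have hDb : relativeEntropy b a = m := by
      have hD : relativeEntropy b a = ((σ - 1) * N σ - psiFn a σ * Z σ) / Z σ := by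
        rw [relativeEntropy, hNdef, hZdef, Finset.mul_sum, Finset.mul_sum,
          ← Finset.sum_sub_distrib, Finset.sum_div]
        apply Finset.sum_congr rfl
        intro i _
        rw [hlogb i]
        show a i ^ σ / Z σ * ((σ * Real.log (a i) - psiFn a σ) - Real.log (a i)) = _
        field_simp
        rw [eq_div_iff hzz]
        ring
      rw [hD, hmdef, div_eq_div_iff hzz hσpos.ne']
      linear_combination (1 - σ) * hσeq'
    refine ⟨m, ⟨⟨b, fun i => (hbpos i).le, hb1, hHb.ge, hDb.symm⟩, ?_⟩,
      ⟨σ, hσpos, hσ1, rfl⟩, ?_⟩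
    · rintro x ⟨b', hb', hb'1, hb'R, rfl⟩
      exact lower σ hσpos hσ1 b' hb' hb'1 hb'R
    · rintro y ⟨s, hs, hs1, rfl⟩
      have hcs : σ * φ σ = psiFn a σ - R := by linarith [hσeq]
      have h2 := mul_le_mul_of_nonneg_left (hsupp σ s) hσpos.le
      have h3 : σ * (φ σ * (s - σ)) = (psiFn a σ - R) * (s - σ) := by
        rw [← mul_assoc, hcs]
      rw [hmdef, div_le_div_iff₀ hs hσpos]
      nlinarith [h2, h3]
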